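/- arXiv:2511.12398 — 2 statements merged into one kernel-verified Lean document; each statement's English description precedes it below -/
import Mathlib

section
/- The energy-based sparse grid index set X_n is symmetric: for any l = (l_1,…,l_d) ∈ X_n and any permutation τ ∈ S_d, one has τ(l) = (l_{τ(1)},…,l_{τ(d)}) ∈ X_n. Moreover, the total number of grid points in the symmetric sparse grid satisfies |⋃_{l ∈ X_n ∩ ℕ^d_ord} i_l| ≤ C_s · 2^n · e^{π√(5d/3)}, where C_s > 0 is a constant independent of both n and d. -/
open MeasureTheory Real Finset
open scoped Classical

noncomputable section

/-- The squared ReLU activation function. -/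
def sqReLU (x : ℝ) : ℝ := (max 0 x) ^ 2

/-- A feedforward neural network: `depth` hidden layers, layer dimensions `dims`
(`dims 0` is the input dimension, `dims (depth+1)` the output dimension),
weight matrices `W` and bias vectors `b`. -/
structure SqNet where
  depth : ℕ
  dims : ℕ → ℕ
  W : ∀ i, Matrix (Fin (dims (i + 1))) (Fin (dims i)) ℝ
  b : ∀ i, Fin (dims (i + 1)) → ℝ

namespace SqNet

/-- Output of the `i`-th hidden layer (with squared ReLU activation). -/
def hiddenF (net : SqNet) (x : Fin (net.dims 0) → ℝ) : (i : ℕ) → Fin (net.dims i) → ℝ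
  | 0 => x
  | i + 1 => fun j => sqReLU ((∑ k, net.W i j k * hiddenF net x i k) + net.b i j)

/-- The output of the network: a final affine layer without activation. -/
def out (net : SqNet) (x : Fin (net.dims 0) → ℝ) : Fin (net.dims (net.depth + 1)) → ℝ :=
  fun j => (∑ k, net.W net.depth j k * net.hiddenF x net.depth k) + net.b net.depth j

/-- The width of a network: the maximal dimension of a hidden layer. -/
def width (net : SqNet) : ℕ := (Finset.range net.depth).sup fun i => net.dims (i + 1)

/-- Total number of (hidden) neurons. -/
def numNeurons (net : SqNet) : ℕ := ∑ i ∈ Finset.range net.depth, net.dims (i + 1)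

/-- Total number of parameters (weights and biases). -/
def numParams (net : SqNet) : ℕ :=
  ∑ i ∈ Finset.range (net.depth + 1), (net.dims (i + 1) * net.dims i + net.dims (i + 1))

/-- The network `net` computes the scalar function `f` on `ℝ^d`. -/
def Realizes (net : SqNet) {d : ℕ} (f : (Fin d → ℝ) → ℝ) : Prop :=
  ∃ (h0 : net.dims 0 = d) (h1 : net.dims (net.depth + 1) = 1),
    ∀ x : Fin d → ℝ, f x = net.out (fun k => x (Fin.cast h0 k)) ⟨0, by omega⟩

end SqNet

/-- The unit cube `Ω = [0,1]^d`. -/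
def unitCube (d : ℕ) : Set (Fin d → ℝ) := Set.univ.pi fun _ => Set.Icc 0 1

/-- Lebesgue measure restricted to the unit cube. -/
def cubeMeasure (d : ℕ) : Measure (Fin d → ℝ) := volume.restrict (unitCube d)

/-- Partial derivative in the `j`-th coordinate direction. -/
def pderiv1 {d : ℕ} (j : Fin d) (f : (Fin d → ℝ) → ℝ) : (Fin d → ℝ) → ℝ :=
  fun x => fderiv ℝ f x (Pi.single j 1)

/-- Iterated partial derivative in direction `j`. -/
def pderivIter {d : ℕ} (j : Fin d) : ℕ → ((Fin d → ℝ) → ℝ) → ((Fin d → ℝ) → ℝ)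
  | 0, f => f
  | n + 1, f => pderiv1 j (pderivIter j n f)

/-- Mixed derivative `D^k f` for a multi-index `k`. -/
def mixedDeriv {d : ℕ} (k : Fin d → ℕ) (f : (Fin d → ℝ) → ℝ) : (Fin d → ℝ) → ℝ :=
  (List.ofFn fun j : Fin d => pderivIter j (k j)).foldr (fun F g => F g) f

/-- The Korobov semi-norm `|f|_{2,2} = ‖∂^{2d} f/(∂x_1^2 ⋯ ∂x_d^2)‖_{L^2(Ω)}`. -/
def korobovSeminorm (d : ℕ) (f : (Fin d → ℝ) → ℝ) : ℝ :=
  (∫ x, (mixedDeriv (fun _ => 2) f x) ^ 2 ∂cubeMeasure d) ^ (1 / 2 : ℝ)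

/-- The energy norm `‖f‖_E = (∫_Ω Σ_j (∂f/∂x_j)^2)^{1/2}`. -/
def energyNorm (d : ℕ) (f : (Fin d → ℝ) → ℝ) : ℝ :=
  (∫ x, ∑ j, (pderiv1 j f x) ^ 2 ∂cubeMeasure d) ^ (1 / 2 : ℝ)

/-- Membership in the Korobov space `X^{2,2}([0,1]^d)`: `f ∈ L^2`, `f` vanishes on the
boundary, and all mixed derivatives `D^k f` with `|k|_∞ ≤ 2` are in `L^2`. -/
def MemKorobov (d : ℕ) (f : (Fin d → ℝ) → ℝ) : Prop :=
  MemLp f 2 (cubeMeasure d) ∧ (∀ x ∈ frontier (unitCube d), f x = 0) ∧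
    ∀ k : Fin d → ℕ, (∀ j, k j ≤ 2) → MemLp (mixedDeriv k f) 2 (cubeMeasure d)

/-- A function of `d` variables is symmetric if it is invariant under permutations
of its arguments. -/
def IsSymmetricFun (d : ℕ) (f : (Fin d → ℝ) → ℝ) : Prop :=
  ∀ (τ : Equiv.Perm (Fin d)) (x : Fin d → ℝ), f (fun i => x (τ i)) = f x

/-- The standard hat function: `1 - |x|` on `[-1,1]`, `0` otherwise. -/
def hatFn (x : ℝ) : ℝ := if |x| ≤ 1 then 1 - |x| else 0

/-- Scaled and translated hat function `φ_{l,i}(x) = φ((x - i 2^{-l})/2^{-l}) = φ(2^l x - i)`. -/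
def hat1 (l i : ℕ) (x : ℝ) : ℝ := hatFn ((2 : ℝ) ^ l * x - i)

/-- Tensor-product sparse grid basis function `φ_{l,i}`. -/
def gridBasis {d : ℕ} (l i : Fin d → ℕ) (x : Fin d → ℝ) : ℝ := ∏ j, hat1 (l j) (i j) (x j)

/-- Symmetrized sparse grid basis function `ψ_{l,i}(x) = Σ_{τ ∈ S_d} φ_{l,i}(τ(x))`. -/
def symBasis (d : ℕ) (l i : Fin d → ℕ) (x : Fin d → ℝ) : ℝ :=
  ∑ τ : Equiv.Perm (Fin d), gridBasis l i fun j => x (τ j)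

/-- The index set `i_l = {i : 1 ≤ i ≤ 2^l - 1, all i_j odd}`. -/
def gridIdx {d : ℕ} (l : Fin d → ℕ) : Finset (Fin d → ℕ) :=
  Fintype.piFinset fun j => (Finset.Icc 1 (2 ^ l j - 1)).filter fun m => Odd m

/-- The hierarchical coefficient `v_{l,i} = ∫_Ω φ_{l,i}(x) D^{(2,…,2)} f(x) dx`. -/
def gridCoeff (d : ℕ) (f : (Fin d → ℝ) → ℝ) (l i : Fin d → ℕ) : ℝ :=
  ∫ x, gridBasis l i x * mixedDeriv (fun _ => 2) f x ∂cubeMeasure d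

/-- The defining condition of the energy-based sparse-grid index set `X_n`. -/
def XnCond (d n : ℕ) (l : Fin d → ℕ) : Prop :=
  (∀ j, 1 ≤ l j) ∧
    (∑ j, (l j : ℝ)) - (1 / 5) * Real.logb 2 (∑ j, (4 : ℝ) ^ l j) ≤
      ((n : ℝ) + d - 1) - (1 / 5) * Real.logb 2 ((4 : ℝ) ^ n + 4 * d - 4)

/-- The energy-based sparse-grid index set `X_n` (as a finite set; by Lemma 3.9
its elements satisfy `|l|_1 ≤ n + d - 1`, so they lie in the box `[1, n+d]^d`). -/
def XnFinset (d n : ℕ) : Finset (Fin d → ℕ) :=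
  (Fintype.piFinset fun _ : Fin d => Finset.Icc 1 (n + d)).filter fun l => XnCond d n l

/-- The ordered (nondecreasing) level indices in `X_n`, i.e. `X_n ∩ ℕ^d_ord`. -/
def XnOrdFinset (d n : ℕ) : Finset (Fin d → ℕ) :=
  (XnFinset d n).filter fun l => ∀ j j' : Fin d, j ≤ j' → l j ≤ l j'

/-- The `H^1` norm on the cube `[0,1]^d`. -/
def H1normCube (d : ℕ) (u : (Fin d → ℝ) → ℝ) : ℝ :=
  ((∫ x, (u x) ^ 2 ∂cubeMeasure d) + ∑ s, ∫ x, (pderiv1 s u x) ^ 2 ∂cubeMeasure d) ^ (1 / 2 : ℝ)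

/-- The `H^1` norm of a univariate function on a set `s ⊆ ℝ`. -/
def H1normOn (s : Set ℝ) (u : ℝ → ℝ) : ℝ :=
  ((∫ x in s, (u x) ^ 2) + ∫ x in s, (deriv u x) ^ 2) ^ (1 / 2 : ℝ)

/-- Membership in `H^1([0,1])`: the function and its derivative are in `L^2([0,1])`. -/
def MemH1I (u : ℝ → ℝ) : Prop :=
  MemLp u 2 (volume.restrict (Set.Icc (0 : ℝ) 1)) ∧
    MemLp (deriv u) 2 (volume.restrict (Set.Icc (0 : ℝ) 1))

/-- The ReLU function. -/
def reluFn (x : ℝ) : ℝ := max 0 x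

/-- `S_δ(x) = (σ(x) - σ(x-δ))/(2δ)` where `σ` is the squared ReLU. -/
def Sdelta (δ x : ℝ) : ℝ := (sqReLU x - sqReLU (x - δ)) / (2 * δ)

/-- The hypothesis class `F_{m,L}`: sums of `m` squared ReLU networks of width `3d^2`
and depth `⌊log₂ d⌋ + 2`, with gradient bounded by `L` on the cube. -/
def Fclass (d m : ℕ) (L : ℝ) : Set ((Fin d → ℝ) → ℝ) :=
  {φ | (∃ s : Fin m → ((Fin d → ℝ) → ℝ),
          (φ = fun x => ∑ i, s i x) ∧
          ∀ i, ∃ net : SqNet,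
            net.Realizes (s i) ∧ net.width ≤ 3 * d ^ 2 ∧ net.depth = Nat.log 2 d + 2) ∧
       ∀ x ∈ unitCube d, ∀ k, |pderiv1 k φ x| ≤ L}

/-- The class of `k`-th partial derivatives of members of `F_{m,L}`. -/
def pdClass (d m : ℕ) (L : ℝ) (k : Fin d) : Set ((Fin d → ℝ) → ℝ) :=
  pderiv1 k '' Fclass d m L

/-- The empirical loss `E_S(f) = (1/M) Σ_j |∇f(x_j) - y_j|^2`. -/
def empLoss (d M : ℕ) (S : Fin M → (Fin d → ℝ) × (Fin d → ℝ))
    (f : (Fin d → ℝ) → ℝ) : ℝ :=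
  (1 / M) * ∑ j, ∑ k, (pderiv1 k f (S j).1 - (S j).2 k) ^ 2

/-- Covering number (at scale `ε`, sup-norm) of a set of vectors in `ℝ^n`. -/
def coverNum (n : ℕ) (ε : ℝ) (T : Set (Fin n → ℝ)) : ℝ :=
  sInf {r : ℝ | ∃ c : Finset (Fin n → ℝ), (c.card : ℝ) = r ∧
    T ⊆ ⋃ v ∈ c, {w | ∀ i, |w i - v i| ≤ ε}}

/-- Uniform covering number `N(ε, G, n)` of a function class `G` over `n` sample points. -/
def unifCoverNum {X : Type*} (ε : ℝ) (G : Set (X → ℝ)) (n : ℕ) : ℝ :=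
  sSup {r : ℝ | ∃ Z : Fin n → X, r = coverNum n ε ((fun u => fun i : Fin n => u (Z i)) '' G)}

end


/-!
Symmetry holds because `X_n` is defined through the permutation-invariant quantities `|l|_1` and
`Σ_j 4^{l_j}`.

For the count, an ordered level `l ∈ X_n` with `D` entries is encoded by its increments
`u_i = l_i - l_{i-1}` (where `l_{-1} = 1`), so that `K := l_max - 1 = Σ_i u_i` and
`J := Σ_{j < D-1} (l_j - 1) = Σ_i (D - 1 - i) u_i`. Since `Σ_j 4^{l_j} ≤ D 4^{l_max}`, the
condition defining `X_n` gives `3K + 5J ≤ N := 3n - 3 + log₂ D`, and level `l` carries at most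
`2^{K+J}` grid points. Then `2^{K+J} ≤ 2^{3N/10} ρ^K q^J` with `ρ = 2^{1/10}` and `q = 2^{-1/2}`,
and `ρ^K q^J = Π_i (ρ q^{D-1-i})^{u_i}`. Summing over the (injective) increment vectors gives a
product of geometric series: the one of ratio `ρ > 1` is cut off at `K ≤ N/3` and contributes
`O(ρ^{N/3})`, and the others multiply to at most `exp (ρq / ((1 - ρq)(1 - q)))`. The total is
`O(2^{N/3}) = O(2^n D^{1/3})`, which is `O(2^n e^{π√(5D/3)})`.
-/

theorem XnCond.comp_perm {d n : ℕ} {l : Fin d → ℕ} (h : XnCond d n l)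
    (τ : Equiv.Perm (Fin d)) : XnCond d n fun j => l (τ j) := by
  obtain ⟨hpos, hle⟩ := h
  refine ⟨fun j => hpos (τ j), ?_⟩
  rwa [Equiv.sum_comp τ (fun j => (l j : ℝ)), Equiv.sum_comp τ (fun j => (4 : ℝ) ^ l j)]

theorem card_filter_odd_Icc_le (L : ℕ) : #{m ∈ Icc 1 (2 ^ L - 1) | Odd m} ≤ 2 ^ (L - 1) := by
  rcases L with _ | L
  · simp
  rw [add_tsub_cancel_right, ← card_range (2 ^ L)]
  refine card_le_card_of_injOn (· / 2) (fun m hm => ?_) (fun m hm m' hm' h => ?_)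
  · simp only [mem_coe, mem_filter, mem_Icc, mem_range, Nat.odd_iff, pow_succ] at hm ⊢
    omega
  · simp only [mem_coe, mem_filter, Nat.odd_iff] at hm hm' h
    omega

theorem card_gridIdx_le {d : ℕ} (l : Fin d → ℕ) : #(gridIdx l) ≤ 2 ^ ∑ j, (l j - 1) := by
  rw [gridIdx, Fintype.card_piFinset, ← prod_pow_eq_pow_sum]
  exact prod_le_prod' fun j _ => card_filter_odd_Icc_le (l j)

theorem logb_two_four_pow (k : ℕ) : logb 2 ((4 : ℝ) ^ k) = 2 * k := by
  rw [show (4 : ℝ) ^ k = 2 ^ (2 * k) by rw [pow_mul]; norm_num, Real.logb_pow,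
    Real.logb_self_eq_one one_lt_two]
  push_cast; ring

noncomputable def levelBudget (d n : ℕ) : ℝ := 3 * n - 3 + logb 2 d

theorem XnCond.five_mul_sum_sub_one_le {d n L : ℕ} {l : Fin d → ℕ} (h : XnCond d n l)
    (hd : 0 < d) (hL : ∀ j, l j ≤ L) :
    5 * ∑ j, ((l j : ℝ) - 1) ≤ 2 * ((L : ℝ) - 1) + levelBudget d n := by
  obtain ⟨-, hcond⟩ := h
  have hd' : (1 : ℝ) ≤ d := by exact_mod_cast hd
  have hsum : logb 2 (∑ j, (4 : ℝ) ^ l j) ≤ logb 2 d + 2 * L := by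
    have hpos : 0 < ∑ j, (4 : ℝ) ^ l j :=
      sum_pos (fun j _ => by positivity) (univ_nonempty_iff.2 ⟨⟨0, hd⟩⟩)
    calc logb 2 (∑ j, (4 : ℝ) ^ l j) ≤ logb 2 (d * 4 ^ L) := by
          refine logb_le_logb_of_le one_lt_two hpos ?_
          calc ∑ j, (4 : ℝ) ^ l j ≤ ∑ _j : Fin d, (4 : ℝ) ^ L :=
                sum_le_sum fun j _ => pow_le_pow_right₀ (by norm_num) (hL j)
            _ = d * 4 ^ L := by simp
      _ = logb 2 d + 2 * L := by
          rw [logb_mul (by positivity) (by positivity), logb_two_four_pow]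
  have hn : 2 * (n : ℝ) ≤ logb 2 ((4 : ℝ) ^ n + 4 * d - 4) := by
    rw [← logb_two_four_pow]
    exact logb_le_logb_of_le one_lt_two (by positivity) (by linarith)
  rw [levelBudget, sum_sub_distrib]
  simp only [sum_const, card_univ, Fintype.card_fin, nsmul_eq_mul, mul_one]
  linarith

theorem levelBudget_nonneg {d n : ℕ} (hd : 0 < d) (hn : 0 < n) : 0 ≤ levelBudget d n := by
  have hn' : (1 : ℝ) ≤ n := by exact_mod_cast hn
  have := logb_nonneg one_lt_two (by exact_mod_cast hd : (1 : ℝ) ≤ d)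
  rw [levelBudget]
  linarith

theorem two_rpow_levelBudget_div_three {d n : ℕ} (hd : 0 < d) :
    (2 : ℝ) ^ (levelBudget d n / 3) = 2 ^ n / 2 * (d : ℝ) ^ (1 / 3 : ℝ) := by
  rw [levelBudget, show (3 * n - 3 + logb 2 d) / 3 = (n - 1 : ℝ) + logb 2 d * (1 / 3) by ring,
    rpow_add two_pos, rpow_mul zero_le_two, rpow_logb two_pos (by norm_num) (by exact_mod_cast hd),
    rpow_sub two_pos, rpow_natCast, rpow_one]

theorem monotone_of_mem_XnOrdFinset {d n : ℕ} {l : Fin d → ℕ} (hl : l ∈ XnOrdFinset d n) :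
    Monotone l :=
  (mem_filter.1 hl).2

theorem XnCond.of_mem_XnOrdFinset {d n : ℕ} {l : Fin d → ℕ} (hl : l ∈ XnOrdFinset d n) :
    XnCond d n l :=
  (mem_filter.1 (mem_filter.1 hl).1).2

theorem Monotone.fin_cons {α : Type*} [Preorder α] {n : ℕ} {x : α} {l : Fin (n + 1) → α}
    (hl : Monotone l) (hx : x ≤ l 0) : Monotone (Fin.cons x l : Fin (n + 2) → α) := by
  refine Fin.monotone_iff_le_succ.2 fun i => ?_
  cases i using Fin.cases with
  | zero => simpa using hx
  | succ i => simpa using hl (Fin.castSucc_le_succ i)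

def increments {D : ℕ} (f : Fin (D + 1) → ℕ) (i : Fin D) : ℕ := f i.succ - f i.castSucc

namespace Monotone

variable {D : ℕ} {f : Fin (D + 1) → ℕ}

theorem apply_succ_eq_add_sum_increments (hf : Monotone f) (a : Fin D) :
    f a.succ = f 0 + ∑ i ∈ Iic a, increments f i := by
  have hcast : ∀ i, (increments f i : ℤ) = f i.succ - f i.castSucc := fun i =>
    Nat.cast_sub (hf (Fin.castSucc_le_succ i))
  zify
  rw [sum_congr rfl fun i _ => hcast i, Fin.sum_Iic_sub a fun i => (f i : ℤ)]
  ring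

theorem sum_apply_succ_sub_apply_zero (hf : Monotone f) :
    ∑ a : Fin D, (f a.succ - f 0) = ∑ i, (i.rev + 1) * increments f i := by
  simp_rw [hf.apply_succ_eq_add_sum_increments, add_tsub_cancel_left]
  rw [sum_comm' (t' := univ) (s' := Ici) (by simp)]
  refine sum_congr rfl fun i _ => ?_
  rw [sum_const, Fin.card_Ici, smul_eq_mul, Fin.val_rev]
  congr 1
  omega

theorem eq_of_increments_eq {g : Fin (D + 1) → ℕ} (hf : Monotone f) (hg : Monotone g)
    (h0 : f 0 = g 0) (h : increments f = increments g) : f = g := by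
  funext a
  cases a using Fin.cases with
  | zero => exact h0
  | succ a => rw [hf.apply_succ_eq_add_sum_increments, hg.apply_succ_eq_add_sum_increments, h0, h]

end Monotone

def levelIncrements {d : ℕ} (l : Fin (d + 1) → ℕ) : Fin (d + 1) → ℕ :=
  increments (Fin.cons 1 l : Fin (d + 2) → ℕ)

section LevelIncrements

variable {d : ℕ} {l : Fin (d + 1) → ℕ}

theorem sum_sub_one_eq_sum_levelIncrements (hl : Monotone l) (h0 : 1 ≤ l 0) :
    ∑ j, (l j - 1) = ∑ i, levelIncrements l i + ∑ i, i.rev * levelIncrements l i := by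
  have h := (hl.fin_cons h0).sum_apply_succ_sub_apply_zero
  simp only [Fin.cons_succ, Fin.cons_zero] at h
  rw [h, levelIncrements, ← sum_add_distrib]
  exact sum_congr rfl fun i _ => by ring

theorem last_sub_one_eq_sum_levelIncrements (hl : Monotone l) (h0 : 1 ≤ l 0) :
    l (Fin.last d) - 1 = ∑ i, levelIncrements l i := by
  have h := (hl.fin_cons h0).apply_succ_eq_add_sum_increments (Fin.last d)
  rw [show Iic (Fin.last d) = univ from Iic_top] at h
  simp only [Fin.cons_succ, Fin.cons_zero] at h
  rw [h, levelIncrements, add_tsub_cancel_left]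

theorem levelIncrements_injOn :
    Set.InjOn (levelIncrements (d := d)) {l | Monotone l ∧ 1 ≤ l 0} := fun _ hl _ hl' h =>
  (Fin.cons_inj.1 <| (hl.1.fin_cons hl.2).eq_of_increments_eq (hl'.1.fin_cons hl'.2) rfl h).2

end LevelIncrements

theorem three_mul_add_five_mul_le_levelBudget {d n : ℕ} {l : Fin (d + 1) → ℕ}
    (hl : l ∈ XnOrdFinset (d + 1) n) :
    3 * ((∑ i, levelIncrements l i : ℕ) : ℝ) +
      5 * ((∑ i, i.rev * levelIncrements l i : ℕ) : ℝ) ≤ levelBudget (d + 1) n := by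
  have hmono := monotone_of_mem_XnOrdFinset hl
  have hcond := XnCond.of_mem_XnOrdFinset hl
  have key := hcond.five_mul_sum_sub_one_le d.succ_pos fun j => hmono (Fin.le_last j)
  have hsum : ∑ j, ((l j : ℝ) - 1) = ((∑ j, (l j - 1) : ℕ) : ℝ) := by
    push_cast [Nat.cast_sub (hcond.1 _)]
    rfl
  rw [hsum, sum_sub_one_eq_sum_levelIncrements hmono (hcond.1 0),
    ← Nat.cast_pred (hcond.1 _), last_sub_one_eq_sum_levelIncrements hmono (hcond.1 0)] at key
  push_cast at key ⊢
  linarith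

theorem Finset.sum_prod_pow_le_prod_geom_sum {α ι : Type*} [Fintype ι] [DecidableEq ι]
    {S : Finset α} {φ : α → ι → ℕ} (hφ : Set.InjOn φ S) {M : ℕ}
    (hM : ∀ a ∈ S, ∀ i, φ a i < M) {r : ι → ℝ} (hr : ∀ i, 0 ≤ r i) :
    ∑ a ∈ S, ∏ i, r i ^ φ a i ≤ ∏ i, ∑ u ∈ range M, r i ^ u := by
  rw [prod_univ_sum, ← sum_image (f := fun c => ∏ i, r i ^ c i) hφ]
  refine sum_le_sum_of_subset_of_nonneg (fun c hc => ?_) fun c _ _ =>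
    prod_nonneg fun i _ => pow_nonneg (hr i) _
  obtain ⟨a, ha, rfl⟩ := mem_image.1 hc
  exact Fintype.mem_piFinset.2 fun i => mem_range.2 (hM a ha i)

theorem geom_sum_le_div_sub_one {ρ : ℝ} (hρ : 1 < ρ) (M : ℕ) :
    ∑ u ∈ range M, ρ ^ u ≤ ρ ^ M / (ρ - 1) := by
  rw [geom_sum_eq hρ.ne' M]
  gcongr
  linarith

theorem inv_one_sub_le_exp_div {x c : ℝ} (hx : 0 ≤ x) (hxc : x ≤ c) (hc : c < 1) :
    (1 - x)⁻¹ ≤ exp (x / (1 - c)) :=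
  calc (1 - x)⁻¹ = x / (1 - x) + 1 := by rw [div_add_one (by linarith), add_sub_cancel, one_div]
    _ ≤ exp (x / (1 - x)) := add_one_le_exp _
    _ ≤ exp (x / (1 - c)) := by gcongr

theorem prod_geom_sum_le_exp {c q : ℝ} (hc : 0 ≤ c) (hq0 : 0 ≤ q) (hq1 : q < 1)
    (hcq : c * q < 1) (d M : ℕ) :
    ∏ k : Fin d, ∑ u ∈ range M, (c * q ^ (k + 1 : ℕ)) ^ u ≤
      exp (c * q / ((1 - c * q) * (1 - q))) := by
  have hterm : ∀ k : ℕ, c * q ^ (k + 1) ≤ c * q := fun k =>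
    mul_le_mul_of_nonneg_left (pow_le_of_le_one hq0 hq1.le k.succ_ne_zero) hc
  have hgeom : ∑ k : Fin d, q ^ (k : ℕ) ≤ (1 - q)⁻¹ := by
    rw [Fin.sum_univ_eq_sum_range (fun k => q ^ k), range_eq_Ico]
    simpa using geom_sum_Ico_le_of_lt_one hq0 hq1 (m := 0) (n := d)
  calc ∏ k : Fin d, ∑ u ∈ range M, (c * q ^ (k + 1 : ℕ)) ^ u
      ≤ ∏ k : Fin d, exp (c * q ^ (k + 1 : ℕ) / (1 - c * q)) := by
        refine prod_le_prod (fun k _ => sum_nonneg fun u _ => by positivity) fun k _ => ?_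
        rw [range_eq_Ico]
        refine (geom_sum_Ico_le_of_lt_one (by positivity) ((hterm k).trans_lt hcq)).trans ?_
        simpa using inv_one_sub_le_exp_div (by positivity) (hterm k) hcq
    _ = exp (c * q / (1 - c * q) * ∑ k : Fin d, q ^ (k : ℕ)) := by
        rw [← exp_sum, mul_sum]
        congr 1
        refine sum_congr rfl fun k _ => ?_
        ring
    _ ≤ exp (c * q / (1 - c * q) * (1 - q)⁻¹) := by gcongr
    _ = exp (c * q / ((1 - c * q) * (1 - q))) := by
        rw [div_mul_eq_div_div, div_eq_mul_inv (c * q / (1 - c * q))]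

theorem prod_geom_sum_rev_le {ρ q : ℝ} (hρ : 1 < ρ) (hq0 : 0 ≤ q) (hq1 : q < 1)
    (hρq : ρ * q < 1) (d M : ℕ) :
    ∏ i : Fin (d + 1), ∑ u ∈ range M, (ρ * q ^ (i.rev : ℕ)) ^ u ≤
      ρ ^ M / (ρ - 1) * exp (ρ * q / ((1 - ρ * q) * (1 - q))) := by
  let F : Fin (d + 1) → ℝ := fun i => ∑ u ∈ range M, (ρ * q ^ (i : ℕ)) ^ u
  refine (Equiv.prod_comp Fin.revPerm F).trans_le ?_
  rw [Fin.prod_univ_succ]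
  simp only [F, Fin.val_zero, pow_zero, mul_one, Fin.val_succ]
  exact mul_le_mul (geom_sum_le_div_sub_one hρ M)
    (prod_geom_sum_le_exp (by linarith) hq0 hq1 hρq d M)
    (prod_nonneg fun k _ => sum_nonneg fun u _ => by positivity)
    (div_nonneg (by positivity) (by linarith))

theorem two_pow_add_le_of_three_mul_add_five_mul_le {K J : ℕ} {N : ℝ}
    (h : 3 * (K : ℝ) + 5 * J ≤ N) :
    (2 : ℝ) ^ (K + J) ≤ 2 ^ (3 / 10 * N) * ((2 : ℝ) ^ (1 / 10 : ℝ)) ^ K *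
      ((2 : ℝ) ^ (-1 / 2 : ℝ)) ^ J := by
  rw [← rpow_mul_natCast zero_le_two, ← rpow_mul_natCast zero_le_two,
    ← rpow_add two_pos, ← rpow_add two_pos, ← rpow_natCast]
  refine rpow_le_rpow_of_exponent_le one_le_two ?_
  push_cast
  linarith

theorem two_rpow_mul_pow_floor_le {N : ℝ} (hN : 0 ≤ N) :
    (2 : ℝ) ^ (3 / 10 * N) * ((2 : ℝ) ^ (1 / 10 : ℝ)) ^ ⌊N / 3⌋₊ ≤ 2 ^ (N / 3) := by
  rw [← rpow_mul_natCast zero_le_two, ← rpow_add two_pos]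
  refine rpow_le_rpow_of_exponent_le one_le_two ?_
  have := Nat.floor_le (div_nonneg hN zero_le_three)
  linarith

theorem levelIncrements_le_floor {d n : ℕ} {l : Fin (d + 1) → ℕ}
    (hl : l ∈ XnOrdFinset (d + 1) n) (i : Fin (d + 1)) :
    levelIncrements l i ≤ ⌊levelBudget (d + 1) n / 3⌋₊ := by
  have hK : ((∑ i, levelIncrements l i : ℕ) : ℝ) ≤ levelBudget (d + 1) n / 3 := by
    linarith [three_mul_add_five_mul_le_levelBudget hl,
      Nat.cast_nonneg (α := ℝ) (∑ i, i.rev * levelIncrements l i)]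
  exact (single_le_sum (fun i _ => Nat.zero_le _) (mem_univ i)).trans (Nat.le_floor hK)

theorem two_pow_sum_sub_one_le_prod {d n : ℕ} {l : Fin (d + 1) → ℕ}
    (hl : l ∈ XnOrdFinset (d + 1) n) :
    (2 : ℝ) ^ (∑ j, (l j - 1)) ≤ 2 ^ (3 / 10 * levelBudget (d + 1) n) *
      ∏ i, ((2 : ℝ) ^ (1 / 10 : ℝ) * ((2 : ℝ) ^ (-1 / 2 : ℝ)) ^ (i.rev : ℕ)) ^
        levelIncrements l i := by
  rw [sum_sub_one_eq_sum_levelIncrements (monotone_of_mem_XnOrdFinset hl)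
    ((XnCond.of_mem_XnOrdFinset hl).1 0)]
  simp only [mul_pow, prod_mul_distrib, prod_pow_eq_pow_sum, ← pow_mul, ← mul_assoc]
  exact two_pow_add_le_of_three_mul_add_five_mul_le (three_mul_add_five_mul_le_levelBudget hl)

theorem exists_card_biUnion_gridIdx_le : ∃ C > 0, ∀ d n : ℕ, 0 < n →
    (#((XnOrdFinset (d + 1) n).biUnion gridIdx) : ℝ) ≤ C * 2 ^ (levelBudget (d + 1) n / 3) := by
  set ρ : ℝ := 2 ^ (1 / 10 : ℝ)
  set q : ℝ := 2 ^ (-1 / 2 : ℝ)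
  have hρ : 1 < ρ := one_lt_rpow one_lt_two (by norm_num)
  have hq1 : q < 1 := rpow_lt_one_of_one_lt_of_neg one_lt_two (by norm_num)
  have hρq : ρ * q < 1 := by
    rw [← rpow_add two_pos]
    exact rpow_lt_one_of_one_lt_of_neg one_lt_two (by norm_num)
  refine ⟨ρ / (ρ - 1) * exp (ρ * q / ((1 - ρ * q) * (1 - q))), by positivity,
    fun d n hn => ?_⟩
  set S := XnOrdFinset (d + 1) n
  set N := levelBudget (d + 1) n
  have hS : ∀ l ∈ S, Monotone l ∧ 1 ≤ l 0 := fun l hl =>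
    ⟨monotone_of_mem_XnOrdFinset hl, (XnCond.of_mem_XnOrdFinset hl).1 0⟩
  have hgeom : ∑ l ∈ S, ∏ i, (ρ * q ^ (i.rev : ℕ)) ^ levelIncrements l i ≤
      ∏ i : Fin (d + 1), ∑ u ∈ range (⌊N / 3⌋₊ + 1), (ρ * q ^ (i.rev : ℕ)) ^ u :=
    sum_prod_pow_le_prod_geom_sum (levelIncrements_injOn.mono hS)
      (fun l hl i => Nat.lt_succ_of_le (levelIncrements_le_floor hl i)) fun i => by positivity
  calc (#(S.biUnion gridIdx) : ℝ) ≤ ∑ l ∈ S, (2 : ℝ) ^ (∑ j, (l j - 1)) := by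
        exact_mod_cast card_biUnion_le.trans (sum_le_sum fun l _ => card_gridIdx_le l)
    _ ≤ ∑ l ∈ S, 2 ^ (3 / 10 * N) * ∏ i, (ρ * q ^ (i.rev : ℕ)) ^ levelIncrements l i :=
        sum_le_sum fun l hl => two_pow_sum_sub_one_le_prod hl
    _ ≤ 2 ^ (3 / 10 * N) * (ρ ^ (⌊N / 3⌋₊ + 1) / (ρ - 1) *
          exp (ρ * q / ((1 - ρ * q) * (1 - q)))) := by
        rw [← mul_sum]
        gcongr
        exact hgeom.trans (prod_geom_sum_rev_le hρ (by positivity) hq1 hρq d _)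
    _ = ρ / (ρ - 1) * exp (ρ * q / ((1 - ρ * q) * (1 - q))) *
          (2 ^ (3 / 10 * N) * ρ ^ ⌊N / 3⌋₊) := by ring
    _ ≤ _ := by gcongr; exact two_rpow_mul_pow_floor_le (levelBudget_nonneg d.succ_pos hn)

theorem rpow_one_third_le_exp {x : ℝ} (hx : 1 ≤ x) :
    x ^ (1 / 3 : ℝ) ≤ exp (π * √(5 * x / 3)) :=
  calc x ^ (1 / 3 : ℝ) ≤ x ^ (1 / 2 : ℝ) := rpow_le_rpow_of_exponent_le hx (by norm_num)
    _ = √x := (sqrt_eq_rpow x).symm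
    _ ≤ exp √x := by linarith [add_one_le_exp √x]
    _ ≤ exp (π * √(5 * x / 3)) := by
        gcongr
        calc √x ≤ √(5 * x / 3) := sqrt_le_sqrt (by linarith)
          _ ≤ π * √(5 * x / 3) :=
            le_mul_of_one_le_left (sqrt_nonneg _) (by linarith [pi_gt_three])

/-- Proposition `XNsym`: the energy-based index set `X_n` is
permutation-symmetric, and the total number of grid points in the symmetric sparse grid is
at most `C_s 2^n e^{π√(5d/3)}` with `C_s` independent of `n` and `d`. -/
theorem Xn_symmetric_and_count :
    (∀ (d n : ℕ), 0 < d → 0 < n → ∀ (l : Fin d → ℕ) (τ : Equiv.Perm (Fin d)),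
        XnCond d n l → XnCond d n fun j => l (τ j)) ∧
    ∃ Cs : ℝ, 0 < Cs ∧
      ∀ (d n : ℕ), 0 < d → 0 < n →
        (((XnOrdFinset d n).biUnion gridIdx).card : ℝ) ≤
          Cs * (2 : ℝ) ^ n * Real.exp (π * Real.sqrt (5 * d / 3)) := by
  obtain ⟨C, hC, hcount⟩ := exists_card_biUnion_gridIdx_le
  refine ⟨fun d n _ _ l τ hl => hl.comp_perm τ, C / 2, by positivity, fun d n hd hn => ?_⟩
  obtain ⟨d, rfl⟩ : ∃ d', d = d' + 1 := ⟨d - 1, by omega⟩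
  calc _ ≤ C * 2 ^ (levelBudget (d + 1) n / 3) := hcount d n hn
    _ = C / 2 * 2 ^ n * ((d + 1 : ℕ) : ℝ) ^ (1 / 3 : ℝ) := by
        rw [two_rpow_levelBudget_div_three d.succ_pos]
        ring
    _ ≤ _ := by
        gcongr
        exact rpow_one_third_le_exp (by exact_mod_cast d.succ_pos)
end

section
/- Let h(x) = 1 − |x| for x ∈ [−1,1] and h(x) = 0 otherwise (the standard hat function), and let σ(x) = (max{0,x})^2, S_δ(x) := (σ(x) − σ(x−δ))/(2δ), and h_δ(x) := S_δ(x+1−δ) − 2S_δ(x) + S_δ(x−1+δ). Then for any M ≥ 1, ‖h_δ − h‖_{H^1([−M,M])} → 0 as δ → 0, and for each sufficiently small δ > 0 the support of h_δ is contained in [−1,1], i.e. supp(h_δ) ⊆ supp(h). -/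
open MeasureTheory Real Finset
open scoped Classical

/-! `S_δ` is a smoothed ReLU: it vanishes on `(-∞, 0]`, equals `y - δ/2` on `[δ, ∞)`, is
1-Lipschitz and stays within `δ` of `max 0 y`. The hat function is the second difference
`ρ(x + 1) - 2ρ(x) + ρ(x - 1)` of the ReLU `ρ`, and `h_δ` is the same second difference of `S_δ`
with the outer nodes moved inwards by `δ`. Hence the error `h_δ - h` is at most `6δ`,
is `8`-Lipschitz, and is locally constant off three intervals of total length `4δ`, so that
`‖h_δ - h‖²_{H¹(s)} ≤ 36δ²|s| + 256δ → 0`. The inward shift is what makes `h_δ` vanish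
outside `[-1, 1]`. -/

open Topology
open scoped NNReal

lemma sqReLU_of_nonpos {t : ℝ} (h : t ≤ 0) : sqReLU t = 0 := by
  simp [sqReLU, max_eq_left h]

lemma sqReLU_of_nonneg {t : ℝ} (h : 0 ≤ t) : sqReLU t = t ^ 2 := by
  rw [sqReLU, max_eq_right h]

lemma sqReLU_eq_ite (t : ℝ) : sqReLU t = if 0 ≤ t then t ^ 2 else 0 := by
  split_ifs with h
  · exact sqReLU_of_nonneg h
  · exact sqReLU_of_nonpos (le_of_not_ge h)

lemma Sdelta_of_nonpos {δ y : ℝ} (hδ : 0 ≤ δ) (hy : y ≤ 0) : Sdelta δ y = 0 := by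
  simp [Sdelta, sqReLU_of_nonpos hy, sqReLU_of_nonpos (by linarith : y - δ ≤ 0)]

lemma Sdelta_of_le {δ y : ℝ} (hδ : 0 < δ) (hy : δ ≤ y) : Sdelta δ y = y - δ / 2 := by
  rw [Sdelta, sqReLU_of_nonneg (by linarith), sqReLU_of_nonneg (by linarith)]
  field_simp
  ring

lemma Sdelta_sub_Sdelta_mem_Icc {δ y z : ℝ} (hδ : 0 < δ) (hzy : z ≤ y) :
    Sdelta δ y - Sdelta δ z ∈ Set.Icc 0 (y - z) := by
  rw [Sdelta, Sdelta, div_sub_div_same, Set.mem_Icc, le_div_iff₀ (by positivity),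
    div_le_iff₀ (by positivity)]
  simp only [sqReLU_eq_ite]
  constructor <;> split_ifs <;> nlinarith

lemma lipschitzWith_Sdelta {δ : ℝ} (hδ : 0 < δ) : LipschitzWith 1 (Sdelta δ) := by
  refine LipschitzWith.of_le_add fun y z => ?_
  rw [Real.dist_eq]
  rcases le_total z y with h | h
  · linarith [(Sdelta_sub_Sdelta_mem_Icc hδ h).2, le_abs_self (y - z)]
  · linarith [(Sdelta_sub_Sdelta_mem_Icc hδ h).1, abs_nonneg (y - z)]

lemma abs_Sdelta_sub_max_le {δ : ℝ} (hδ : 0 < δ) (y : ℝ) : |Sdelta δ y - max 0 y| ≤ δ := by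
  rw [Sdelta, div_sub' (by positivity), abs_div, abs_of_pos (by positivity : 0 < 2 * δ),
    div_le_iff₀ (by positivity), abs_le]
  simp only [sqReLU_eq_ite, max_def]
  constructor <;> split_ifs <;> nlinarith

lemma LipschitzWith.second_difference {f : ℝ → ℝ} {K : ℝ≥0} (hf : LipschitzWith K f) (a b : ℝ) :
    LipschitzWith (4 * K) fun x => f (x + a) - 2 * f x + f (x + b) := by
  refine LipschitzWith.of_dist_le_mul fun y z => ?_
  have ha := hf.dist_le_mul (y + a) (z + a)
  have h0 := hf.dist_le_mul y z
  have hb := hf.dist_le_mul (y + b) (z + b)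
  simp only [Real.dist_eq, add_sub_add_right_eq_sub, NNReal.coe_mul, NNReal.coe_ofNat]
    at ha h0 hb ⊢
  rw [abs_le] at ha h0 hb ⊢
  constructor <;> nlinarith [abs_nonneg (y - z), K.coe_nonneg]

lemma hatFn_eq (x : ℝ) : hatFn x = max 0 (x + 1) - 2 * max 0 x + max 0 (x + -1) := by
  unfold hatFn
  rcases le_total x 0 with h | h
  · rw [abs_of_nonpos h]; simp only [max_def]; split_ifs <;> linarith
  · rw [abs_of_nonneg h]; simp only [max_def]; split_ifs <;> linarith

lemma hatFn_of_mem_Icc_neg {x : ℝ} (hx : x ∈ Set.Icc (-1) 0) : hatFn x = 1 + x := by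
  rw [hatFn, abs_of_nonpos hx.2, if_pos (by linarith [hx.1])]
  ring

lemma hatFn_of_mem_Icc_pos {x : ℝ} (hx : x ∈ Set.Icc 0 1) : hatFn x = 1 - x := by
  rw [hatFn, abs_of_nonneg hx.1, if_pos hx.2]

lemma hatFn_of_one_le_abs {x : ℝ} (hx : 1 ≤ |x|) : hatFn x = 0 := by
  rcases hx.eq_or_lt with h | h
  · simp [hatFn, ← h]
  · simp [hatFn, not_le.mpr h]

lemma support_hatFn : Function.support hatFn = Set.Ioo (-1) 1 := by
  ext x
  rw [Function.mem_support, Set.mem_Ioo, ← abs_lt]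
  constructor
  · exact fun hx => not_le.mp fun h => hx (hatFn_of_one_le_abs h)
  · intro hx
    rw [hatFn, if_pos hx.le]
    linarith

lemma tsupport_hatFn : tsupport hatFn = Set.Icc (-1) 1 := by
  rw [tsupport, support_hatFn, closure_Ioo (by norm_num)]

lemma lipschitzWith_hatFn : LipschitzWith 4 hatFn := by
  have := (LipschitzWith.id.const_max 0).second_difference 1 (-1)
  rw [mul_one] at this
  exact funext hatFn_eq ▸ this

noncomputable def hDelta (δ x : ℝ) : ℝ := Sdelta δ (x + 1 - δ) - 2 * Sdelta δ x + Sdelta δ (x - 1 + δ)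

lemma lipschitzWith_hDelta {δ : ℝ} (hδ : 0 < δ) : LipschitzWith 4 (hDelta δ) := by
  have := (lipschitzWith_Sdelta hδ).second_difference (1 - δ) (δ - 1)
  rw [mul_one] at this
  convert this using 2 with x
  rw [hDelta, ← add_sub_assoc, ← add_sub_assoc, sub_add_eq_add_sub x 1 δ]

lemma hDelta_of_le_neg_one {δ x : ℝ} (hδ : 0 ≤ δ) (hδ₁ : δ ≤ 1) (hx : x ≤ -1) : hDelta δ x = 0 := by
  rw [hDelta, Sdelta_of_nonpos hδ (by linarith), Sdelta_of_nonpos hδ (by linarith),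
    Sdelta_of_nonpos hδ (by linarith)]
  ring

lemma hDelta_of_one_le {δ x : ℝ} (hδ : 0 < δ) (hδ₁ : δ ≤ 1) (hx : 1 ≤ x) : hDelta δ x = 0 := by
  rw [hDelta, Sdelta_of_le hδ (by linarith), Sdelta_of_le hδ (by linarith),
    Sdelta_of_le hδ (by linarith)]
  ring

lemma hDelta_of_mem_Icc_neg {δ x : ℝ} (hδ : 0 < δ) (hδ₁ : δ ≤ 1)
    (hx : x ∈ Set.Icc (2 * δ - 1) 0) : hDelta δ x = 1 + x - 3 * δ / 2 := by
  rw [hDelta, Sdelta_of_le hδ (by linarith [hx.1]), Sdelta_of_nonpos hδ.le hx.2,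
    Sdelta_of_nonpos hδ.le (by linarith [hx.2])]
  ring

lemma hDelta_of_mem_Icc_pos {δ x : ℝ} (hδ : 0 < δ) (hx : x ∈ Set.Icc δ (1 - δ)) :
    hDelta δ x = 1 - x - δ / 2 := by
  rw [hDelta, Sdelta_of_le hδ (by linarith [hx.1, hx.2]), Sdelta_of_le hδ hx.1,
    Sdelta_of_nonpos hδ.le (by linarith [hx.2])]
  ring

lemma tsupport_hDelta_subset {δ : ℝ} (hδ : 0 < δ) (hδ₁ : δ ≤ 1) :
    tsupport (hDelta δ) ⊆ Set.Icc (-1) 1 := by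
  refine closure_minimal (fun x hx => ?_) isClosed_Icc
  by_contra hx'
  rcases not_and_or.mp hx' with h | h
  · exact hx (hDelta_of_le_neg_one hδ.le hδ₁ (by linarith [not_le.mp h]))
  · exact hx (hDelta_of_one_le hδ hδ₁ (by linarith [not_le.mp h]))


lemma abs_hDelta_sub_hatFn_le {δ : ℝ} (hδ : 0 < δ) (x : ℝ) :
    |hDelta δ x - hatFn x| ≤ 6 * δ := by
  have hrelu : ∀ a b : ℝ, |max 0 a - max 0 b| ≤ |a - b| := fun a b => by
    rw [max_comm 0 a, max_comm 0 b]
    exact abs_max_sub_max_le_abs a b 0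
  have r₁ := hrelu (x + 1 - δ) (x + 1)
  have r₂ := hrelu (x - 1 + δ) (x + -1)
  have e₁ := abs_Sdelta_sub_max_le hδ (x + 1 - δ)
  have e₂ := abs_Sdelta_sub_max_le hδ x
  have e₃ := abs_Sdelta_sub_max_le hδ (x - 1 + δ)
  rw [show x + 1 - δ - (x + 1) = -δ by ring, abs_neg, abs_of_pos hδ] at r₁
  rw [show x - 1 + δ - (x + -1) = δ by ring, abs_of_pos hδ] at r₂
  rw [hDelta, hatFn_eq]
  rw [abs_le] at r₁ r₂ e₁ e₂ e₃ ⊢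
  constructor <;> linarith

def hDeltaTransitionSet (δ : ℝ) : Set ℝ :=
  Set.Icc (-1) (2 * δ - 1) ∪ Set.Icc 0 δ ∪ Set.Icc (1 - δ) 1

lemma measurableSet_hDeltaTransitionSet (δ : ℝ) : MeasurableSet (hDeltaTransitionSet δ) :=
  (measurableSet_Icc.union measurableSet_Icc).union measurableSet_Icc

lemma volume_hDeltaTransitionSet_lt_top (δ : ℝ) : volume (hDeltaTransitionSet δ) < ⊤ :=
  ((isCompact_Icc.union isCompact_Icc).union isCompact_Icc).measure_lt_top

lemma volume_real_hDeltaTransitionSet_le {δ : ℝ} (hδ : 0 < δ) :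
    volume.real (hDeltaTransitionSet δ) ≤ 4 * δ := by
  refine (measureReal_union_le _ _).trans ?_
  refine (add_le_add_left (measureReal_union_le _ _) _).trans ?_
  rw [Real.volume_real_Icc_of_le (by linarith), Real.volume_real_Icc_of_le hδ.le,
    Real.volume_real_Icc_of_le (by linarith)]
  linarith

lemma deriv_eq_zero_of_eqOn_const {f : ℝ → ℝ} {s : Set ℝ} {x : ℝ} (c : ℝ) (hs : IsOpen s)
    (hx : x ∈ s) (h : Set.EqOn f (fun _ => c) s) : deriv f x = 0 := by
  rw [(h.eventuallyEq_of_mem (hs.mem_nhds hx)).deriv_eq, deriv_const]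

lemma deriv_hDelta_sub_hatFn_eq_zero {δ x : ℝ} (hδ : 0 < δ) (hδ₁ : δ ≤ 1)
    (hx : x ∉ hDeltaTransitionSet δ) : deriv (fun y => hDelta δ y - hatFn y) x = 0 := by
  simp only [hDeltaTransitionSet, Set.mem_union, Set.mem_Icc, not_or, not_and_or, not_le] at hx
  obtain ⟨⟨h₁, h₂⟩, h₃⟩ := hx
  rcases lt_or_ge x (-1) with hx₁ | hx₁
  · refine deriv_eq_zero_of_eqOn_const 0 isOpen_Iio hx₁ fun y (hy : y < -1) => ?_
    rw [hDelta_of_le_neg_one hδ.le hδ₁ hy.le,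
      hatFn_of_one_le_abs (le_abs.mpr (Or.inr (by linarith))), sub_zero]
  rcases lt_or_ge x 0 with hx₂ | hx₂
  · refine deriv_eq_zero_of_eqOn_const (-(3 * δ / 2)) isOpen_Ioo
      (show x ∈ Set.Ioo (2 * δ - 1) 0 from ⟨by rcases h₁ with h | h <;> linarith, hx₂⟩) fun y hy => ?_
    rw [hDelta_of_mem_Icc_neg hδ hδ₁ ⟨hy.1.le, hy.2.le⟩,
      hatFn_of_mem_Icc_neg ⟨by linarith [hy.1], hy.2.le⟩]
    ring
  rcases lt_or_ge x 1 with hx₃ | hx₃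
  · refine deriv_eq_zero_of_eqOn_const (-(δ / 2)) isOpen_Ioo
      (show x ∈ Set.Ioo δ (1 - δ) from
        ⟨by rcases h₂ with h | h <;> linarith, by rcases h₃ with h | h <;> linarith⟩)
      fun y hy => ?_
    rw [hDelta_of_mem_Icc_pos hδ ⟨hy.1.le, hy.2.le⟩,
      hatFn_of_mem_Icc_pos ⟨by linarith [hy.1], by linarith [hy.2]⟩]
    ring
  · refine deriv_eq_zero_of_eqOn_const 0 isOpen_Ioi
      (Set.mem_Ioi.mpr (show 1 < x by rcases h₃ with h | h <;> linarith)) fun y (hy : 1 < y) => ?_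
    rw [hDelta_of_one_le hδ hδ₁ hy.le,
      hatFn_of_one_le_abs (le_abs.mpr (Or.inl hy.le)), sub_zero]

lemma setIntegral_sq_le_of_abs_le {α : Type*} [MeasurableSpace α] {μ : Measure α} {f : α → ℝ}
    {s : Set α} {C : ℝ} (hs : μ s < ⊤) (hf : ∀ x ∈ s, |f x| ≤ C) :
    ∫ x in s, f x ^ 2 ∂μ ≤ C ^ 2 * μ.real s :=
  (le_abs_self _).trans <| norm_setIntegral_le_of_norm_le_const (C := C ^ 2) hs fun x hx => by
    rw [Real.norm_eq_abs, abs_pow]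
    exact pow_le_pow_left₀ (abs_nonneg _) (hf x hx) 2

lemma setIntegral_sq_deriv_le_of_lipschitzWith {f : ℝ → ℝ} {K : ℝ≥0} {E : Set ℝ}
    (hf : LipschitzWith K f) (hE : MeasurableSet E) (hE' : volume E < ⊤)
    (hd : ∀ x ∉ E, deriv f x = 0) (s : Set ℝ) :
    ∫ x in s, deriv f x ^ 2 ≤ K ^ 2 * volume.real E := by
  have hind : (fun x => deriv f x ^ 2) = E.indicator fun x => deriv f x ^ 2 := by
    funext x
    by_cases hx : x ∈ E
    · rw [Set.indicator_of_mem hx]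
    · rw [Set.indicator_of_notMem hx, hd x hx, sq, mul_zero]
  rw [hind, setIntegral_indicator hE]
  calc ∫ x in s ∩ E, deriv f x ^ 2
      ≤ K ^ 2 * volume.real (s ∩ E) :=
        setIntegral_sq_le_of_abs_le (measure_inter_lt_top_of_right_ne_top hE'.ne)
          fun x _ => norm_deriv_le_of_lipschitz hf
    _ ≤ K ^ 2 * volume.real E := by
        gcongr
        · exact hE'.ne
        · exact Set.inter_subset_right

lemma H1normOn_nonneg (s : Set ℝ) (u : ℝ → ℝ) : 0 ≤ H1normOn s u :=
  Real.rpow_nonneg (add_nonneg (integral_nonneg fun _ => sq_nonneg _)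
    (integral_nonneg fun _ => sq_nonneg _)) _

lemma H1normOn_le_of_lipschitzWith {f : ℝ → ℝ} {s E : Set ℝ} {C : ℝ} {K : ℝ≥0}
    (hs : volume s < ⊤) (hC : ∀ x ∈ s, |f x| ≤ C) (hf : LipschitzWith K f)
    (hE : MeasurableSet E) (hE' : volume E < ⊤) (hd : ∀ x ∉ E, deriv f x = 0) :
    H1normOn s f ≤ (C ^ 2 * volume.real s + K ^ 2 * volume.real E) ^ (1 / 2 : ℝ) :=
  Real.rpow_le_rpow (add_nonneg (integral_nonneg fun _ => sq_nonneg _)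
    (integral_nonneg fun _ => sq_nonneg _))
    (add_le_add (setIntegral_sq_le_of_abs_le hs hC)
      (setIntegral_sq_deriv_le_of_lipschitzWith hf hE hE' hd s)) (by norm_num)


lemma H1normOn_hDelta_sub_hatFn_le {δ : ℝ} (hδ : 0 < δ) (hδ₁ : δ ≤ 1) {s : Set ℝ}
    (hs : volume s < ⊤) :
    H1normOn s (fun x => hDelta δ x - hatFn x) ≤
      ((6 * δ) ^ 2 * volume.real s + 8 ^ 2 * (4 * δ)) ^ (1 / 2 : ℝ) := by
  refine (H1normOn_le_of_lipschitzWith hs (fun x _ => abs_hDelta_sub_hatFn_le hδ x)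
    ((lipschitzWith_hDelta hδ).sub lipschitzWith_hatFn) (measurableSet_hDeltaTransitionSet δ)
    (volume_hDeltaTransitionSet_lt_top δ)
    fun x hx => deriv_hDelta_sub_hatFn_eq_zero hδ hδ₁ hx).trans ?_
  gcongr
  · norm_num
  · exact volume_real_hDeltaTransitionSet_le hδ

theorem hdelta_tendsto_hat_H1_and_support_general (M : ℝ) :
    Filter.Tendsto
      (fun δ => H1normOn (Set.Icc (-M) M) fun x =>
        (Sdelta δ (x + 1 - δ) - 2 * Sdelta δ x + Sdelta δ (x - 1 + δ)) - hatFn x)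
      (nhdsWithin 0 (Set.Ioi 0)) (nhds 0) ∧
    ∃ δ₀ : ℝ, 0 < δ₀ ∧ ∀ δ : ℝ, 0 < δ → δ < δ₀ →
      tsupport (fun x => Sdelta δ (x + 1 - δ) - 2 * Sdelta δ x + Sdelta δ (x - 1 + δ)) ⊆
        tsupport hatFn := by
  refine ⟨?_, 1, one_pos, fun δ hδ hδ₁ => tsupport_hatFn ▸ tsupport_hDelta_subset hδ hδ₁.le⟩
  set V := volume.real (Set.Icc (-M) M)
  have hbound : ∀ᶠ δ in 𝓝[>] 0, H1normOn (Set.Icc (-M) M) (fun x => hDelta δ x - hatFn x) ≤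
      ((6 * δ) ^ 2 * V + 8 ^ 2 * (4 * δ)) ^ (1 / 2 : ℝ) :=
    Filter.mem_of_superset (Ioo_mem_nhdsGT one_pos) fun δ hδ =>
      H1normOn_hDelta_sub_hatFn_le hδ.1 hδ.2.le measure_Icc_lt_top
  have hcont : Continuous fun δ : ℝ => ((6 * δ) ^ 2 * V + 8 ^ 2 * (4 * δ)) ^ (1 / 2 : ℝ) :=
    (Real.continuous_rpow_const (by norm_num)).comp (by fun_prop)
  have hlim : Filter.Tendsto (fun δ : ℝ => ((6 * δ) ^ 2 * V + 8 ^ 2 * (4 * δ)) ^ (1 / 2 : ℝ))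
      (𝓝[>] 0) (𝓝 0) := by
    simpa using (hcont.tendsto 0).mono_left nhdsWithin_le_nhds
  exact squeeze_zero' (.of_forall fun δ => H1normOn_nonneg _ _) hbound hlim

/-- `h_δ = S_δ(·+1-δ) - 2S_δ + S_δ(·-1+δ)` converges to the hat function
in `H^1([-M,M])` as `δ → 0⁺`, and for sufficiently small `δ` its support is contained in
the support `[-1,1]` of the hat function. -/
theorem hdelta_tendsto_hat_H1_and_support (M : ℝ) (hM : 1 ≤ M) :
    Filter.Tendsto
      (fun δ => H1normOn (Set.Icc (-M) M) fun x =>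
        (Sdelta δ (x + 1 - δ) - 2 * Sdelta δ x + Sdelta δ (x - 1 + δ)) - hatFn x)
      (nhdsWithin 0 (Set.Ioi 0)) (nhds 0) ∧
    ∃ δ₀ : ℝ, 0 < δ₀ ∧ ∀ δ : ℝ, 0 < δ → δ < δ₀ →
      tsupport (fun x => Sdelta δ (x + 1 - δ) - 2 * Sdelta δ x + Sdelta δ (x - 1 + δ)) ⊆
        tsupport hatFn :=
  hdelta_tendsto_hat_H1_and_support_general M
end
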